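/- If α = Eξ < 1 and E(ξ^h) < ∞ for some h > 1, then for every n ≥ 1, E(T_n^h) ≤ E(T^h) < ∞; in particular the total population T has finite h-th moment. -/

import Mathlib

open MeasureTheory ProbabilityTheory Filter
open scoped ENNReal NNReal

noncomputable section

/-- A function `L` is slowly varying if `L(λx)/L(x) → 1` as `x → ∞` for every `λ > 0`. -/
def SlowlyVarying (L : ℝ → ℝ) : Prop :=
  ∀ lam : ℝ, 0 < lam → Tendsto (fun x => L (lam * x) / L x) atTop (nhds 1)

variable {Ω : Type*} [MeasurableSpace Ω]

/-- The tail function `x ↦ P(ζ > x)` of a nonnegative integer-valued random variable. -/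
def natTail (P : Measure Ω) (ζ : Ω → ℕ) (x : ℝ) : ℝ :=
  (P {ω | x < (ζ ω : ℝ)}).toReal

/-- The tail function `x ↦ P(ζ > x)` of an `ℝ≥0∞`-valued random variable. -/
def ennTail (P : Measure Ω) (ζ : Ω → ℝ≥0∞) (x : ℝ) : ℝ :=
  (P {ω | ENNReal.ofReal x < ζ ω}).toReal

/-- A nonnegative integer-valued random variable is regularly varying with index `κ > 0`
if `P(ζ > x) = x^{-κ} L(x)` for a slowly varying `L`. -/
def RegVarying (P : Measure Ω) (ζ : Ω → ℕ) (κ : ℝ) : Prop :=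
  ∃ L : ℝ → ℝ, SlowlyVarying L ∧ ∀ x : ℝ, 0 < x → natTail P ζ x = x ^ (-κ) * L x

def RegVaryingENN (P : Measure Ω) (ζ : Ω → ℝ≥0∞) (κ : ℝ) : Prop :=
  ∃ L : ℝ → ℝ, SlowlyVarying L ∧ ∀ x : ℝ, 0 < x → ennTail P ζ x = x ^ (-κ) * L x

/-- The branching process with immigration: `X_0 = 0`,
`X_{n+1} = Σ_{i=1}^{X_n} ξ_{n+1,i} + η_{n+1}` (indices shifted to start at 0). -/
def bpi (ξ : ℕ → ℕ → Ω → ℕ) (η : ℕ → Ω → ℕ) : ℕ → Ω → ℕ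
  | 0 => fun _ => 0
  | n + 1 => fun ω => (∑ i ∈ Finset.range (bpi ξ η n ω), ξ n i ω) + η n ω

/-- `S_n = X_1 + ⋯ + X_n`, the total population of the branching process with immigration. -/
def bpiSum (ξ : ℕ → ℕ → Ω → ℕ) (η : ℕ → Ω → ℕ) (n : ℕ) (ω : Ω) : ℕ :=
  ∑ m ∈ Finset.range n, bpi ξ η (m + 1) ω

/-- The Galton–Watson process `Z_0 = 1`, `Z_{n+1} = Σ_{i=1}^{Z_n} ξ_{n+1,i}`. -/
def gw (ξ : ℕ → ℕ → Ω → ℕ) : ℕ → Ω → ℕ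
  | 0 => fun _ => 1
  | n + 1 => fun ω => ∑ i ∈ Finset.range (gw ξ n ω), ξ n i ω

/-- A Galton–Watson process started from the initial population `init`. -/
def gwFrom (ξ : ℕ → ℕ → Ω → ℕ) (init : Ω → ℕ) : ℕ → Ω → ℕ
  | 0 => init
  | n + 1 => fun ω => ∑ i ∈ Finset.range (gwFrom ξ init n ω), ξ n i ω

/-- `T_n = 1 + Z_1 + ⋯ + Z_n`, the total population up to generation `n`. -/
def gwTotalUpTo (ξ : ℕ → ℕ → Ω → ℕ) (n : ℕ) (ω : Ω) : ℕ :=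
  ∑ k ∈ Finset.range (n + 1), gw ξ k ω

/-- `T = Σ_{n=0}^∞ Z_n`, the total population of the Galton–Watson process. -/
def gwTotal (ξ : ℕ → ℕ → Ω → ℕ) (ω : Ω) : ℝ≥0∞ :=
  ∑' k, (gw ξ k ω : ℝ≥0∞)

namespace MoTP

lemma measurable_sum_range' {m' : MeasurableSpace Ω} {f : Ω → ℕ} {g : ℕ → Ω → ℕ}
    (hf : Measurable[m'] f) (hg : ∀ i, Measurable[m'] (g i)) :
    Measurable[m'] (fun ω => ∑ i ∈ Finset.range (f ω), g i ω) := by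
  refine measurable_to_countable' fun k => ?_
  have heq : (fun ω => ∑ i ∈ Finset.range (f ω), g i ω) ⁻¹' {k} =
      ⋃ z : ℕ, ((f ⁻¹' {z}) ∩ ((fun ω => ∑ i ∈ Finset.range z, g i ω) ⁻¹' {k})) := by
    ext ω
    simp only [Set.mem_preimage, Set.mem_singleton_iff, Set.mem_iUnion, Set.mem_inter_iff]
    constructor
    · intro hk; exact ⟨f ω, rfl, hk⟩
    · rintro ⟨z, hz, hk⟩; rw [← hz] at hk; exact hk
  rw [heq]
  refine MeasurableSet.iUnion fun z => (hf (measurableSet_singleton z)).inter ?_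
  exact (Finset.measurable_sum (Finset.range z) fun i _ => hg i) (measurableSet_singleton k)

lemma gw_measurable_of {m' : MeasurableSpace Ω} {ξ : ℕ → ℕ → Ω → ℕ} {n : ℕ}
    (hξ : ∀ m i, m < n → Measurable[m'] (ξ m i)) :
    ∀ k, k ≤ n → Measurable[m'] (gw ξ k) := by
  intro k
  induction k with
  | zero => intro _; exact measurable_const
  | succ k ih =>
    intro hk
    have h1 : Measurable[m'] (gw ξ k) := ih (Nat.le_of_succ_le hk)
    exact measurable_sum_range' h1 (fun i => hξ k i (Nat.lt_of_succ_le hk))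

lemma gw_measurable {ξ : ℕ → ℕ → Ω → ℕ} (hmeas : ∀ n i, Measurable (ξ n i)) (n : ℕ) :
    Measurable (gw ξ n) :=
  gw_measurable_of (n := n) (fun m i _ => hmeas m i) n le_rfl

/-- splitting inequality `(s+u)^g ≤ (1+t)^g s^g + (1+1/t)^g u^g`. -/
lemma split_rpow {t : ℝ} (ht : 0 < t) {g : ℝ} (hg : 0 ≤ g) (s u : ℝ≥0∞) :
    (s + u) ^ g ≤ ENNReal.ofReal (1 + t) ^ g * s ^ g + ENNReal.ofReal (1 + 1/t) ^ g * u ^ g := by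
  have key : s + u ≤ max (ENNReal.ofReal (1 + t) * s) (ENNReal.ofReal (1 + 1/t) * u) := by
    by_cases hcase : u ≤ ENNReal.ofReal t * s
    · refine le_trans ?_ (le_max_left _ _)
      rw [ENNReal.ofReal_add one_pos.le ht.le, ENNReal.ofReal_one, add_mul, one_mul]
      exact add_le_add le_rfl hcase
    · push_neg at hcase
      refine le_trans ?_ (le_max_right _ _)
      have ht0 : ENNReal.ofReal t ≠ 0 := by simp [ht]
      have hs : s ≤ (ENNReal.ofReal t)⁻¹ * u := by
        have : (ENNReal.ofReal t)⁻¹ * (ENNReal.ofReal t * s) ≤ (ENNReal.ofReal t)⁻¹ * u :=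
          mul_le_mul_right hcase.le _
        rwa [← mul_assoc, ENNReal.inv_mul_cancel ht0 ENNReal.ofReal_ne_top, one_mul] at this
      calc s + u ≤ (ENNReal.ofReal t)⁻¹ * u + u := add_le_add hs le_rfl
        _ = ENNReal.ofReal (1 + 1/t) * u := by
            rw [ENNReal.ofReal_add one_pos.le (by positivity), ENNReal.ofReal_one, add_mul, one_mul,
              one_div, ENNReal.ofReal_inv_of_pos ht, add_comm]
  calc (s + u) ^ g ≤ (max (ENNReal.ofReal (1 + t) * s) (ENNReal.ofReal (1 + 1/t) * u)) ^ g :=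
        ENNReal.rpow_le_rpow key hg
    _ ≤ _ := by
        rcases max_cases (ENNReal.ofReal (1 + t) * s) (ENNReal.ofReal (1 + 1/t) * u) with ⟨hm, _⟩ | ⟨hm, _⟩ <;> rw [hm]
        · rw [ENNReal.mul_rpow_of_nonneg _ _ hg]; exact le_add_of_nonneg_right zero_le
        · rw [ENNReal.mul_rpow_of_nonneg _ _ hg]; exact le_add_of_nonneg_left zero_le

/-- `(1 + c n) r^n ≤ d ((1+r)/2)^n` for suitable `d`. -/
lemma real_poly_geom {c r : ℝ} (h05 : 1/2 ≤ r) (hr : r < 1) (hc : 0 ≤ c) :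
    ∃ d : ℝ, 1 ≤ d ∧ ∀ n : ℕ, (1 + c * n) * r ^ n ≤ d * ((1 + r)/2) ^ n := by
  have hr0 : 0 < r := lt_of_lt_of_le (by norm_num) h05
  obtain ⟨κ, hκ1, hκprod⟩ : ∃ κ : ℝ, 1 < κ ∧ κ * r = (1 + r) / 2 := by
    refine ⟨(1 + r) / (2 * r), ?_, by field_simp⟩
    rw [lt_div_iff₀ (by positivity)]
    linarith
  have hκ0 : (0:ℝ) < κ - 1 := by linarith
  set d : ℝ := max 1 (c / (κ - 1)) with hd
  refine ⟨d, le_max_left _ _, fun n => ?_⟩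
  have hbern : 1 + (n:ℝ) * (κ - 1) ≤ κ ^ n := by
    have := one_add_mul_le_pow (a := κ - 1) (by linarith) n
    simpa using this
  have hd0 : (1:ℝ) ≤ d := le_max_left _ _
  have hd1 : 1 + c * n ≤ d * κ ^ n := by
    have h2 : d * (1 + n * (κ - 1)) ≤ d * κ ^ n :=
      mul_le_mul_of_nonneg_left hbern (by linarith)
    refine le_trans ?_ h2
    have hcn : c * n ≤ d * (n * (κ - 1)) := by
      have heq : c / (κ - 1) * (n * (κ - 1)) = c * n := by
        field_simp
      calc c * n = c / (κ - 1) * (n * (κ - 1)) := heq.symm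
        _ ≤ d * (n * (κ - 1)) := by
            apply mul_le_mul_of_nonneg_right (le_max_right _ _)
            exact mul_nonneg (Nat.cast_nonneg n) hκ0.le
    calc 1 + c * n ≤ d + d * (n * (κ - 1)) := add_le_add hd0 hcn
      _ = d * (1 + n * (κ - 1)) := by ring
  calc (1 + c * n) * r ^ n ≤ d * κ ^ n * r ^ n :=
        mul_le_mul_of_nonneg_right hd1 (by positivity)
    _ = d * ((1 + r)/2) ^ n := by rw [mul_assoc, ← mul_pow, hκprod]


lemma indep_past_row (P : Measure Ω) [IsProbabilityMeasure P] {ξ : ℕ → ℕ → Ω → ℕ}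
    (hmeas : ∀ n i, Measurable (ξ n i))
    (hindep : iIndepFun (fun q : ℕ × ℕ => ξ q.1 q.2) P) (n : ℕ) :
    IndepFun (gw ξ n) (fun ω => (fun i => ξ n i ω)) P := by
  set s : ℕ × ℕ → MeasurableSpace Ω :=
    fun q => MeasurableSpace.comap (ξ q.1 q.2) inferInstance with hs
  have hle : ∀ q, s q ≤ ‹MeasurableSpace Ω› := fun q => (hmeas q.1 q.2).comap_le
  have hii : iIndep s P := hindep.iIndep
  have h := indep_biSup_compl hle hii {q : ℕ × ℕ | q.1 < n}
  rw [IndepFun_iff_Indep]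
  refine indep_of_indep_of_le_right (indep_of_indep_of_le_left h ?_) ?_
  · rw [← measurable_iff_comap_le]
    refine gw_measurable_of (n := n) (fun m i hm => ?_) n le_rfl
    exact Measurable.of_comap_le
      (le_biSup s (show ((m,i) : ℕ×ℕ) ∈ {q : ℕ×ℕ | q.1 < n} from hm))
  · show MeasurableSpace.comap _ MeasurableSpace.pi ≤ _
    rw [MeasurableSpace.pi, MeasurableSpace.comap_iSup]
    refine iSup_le fun i => ?_
    rw [MeasurableSpace.comap_comp]
    have heq : MeasurableSpace.comap
        ((fun w : ℕ → ℕ => w i) ∘ (fun ω => (fun j => ξ n j ω))) inferInstance = s (n, i) := rfl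
    rw [heq]
    exact le_biSup s (show ((n,i) : ℕ×ℕ) ∈ {q : ℕ×ℕ | q.1 < n}ᶜ from by simp)

lemma cond_lintegral (P : Measure Ω) [IsProbabilityMeasure P] {ξ : ℕ → ℕ → Ω → ℕ}
    (hmeas : ∀ n i, Measurable (ξ n i))
    (hindep : iIndepFun (fun q : ℕ × ℕ => ξ q.1 q.2) P)
    (n : ℕ) (G : (ℕ → ℕ) → ℕ → ℝ≥0∞) (hG : ∀ z, Measurable (fun w : ℕ → ℕ => G w z)) :
    ∫⁻ ω, G (fun i => ξ n i ω) (gw ξ n ω) ∂P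
      = ∑' z : ℕ, P {ω | gw ξ n ω = z} * ∫⁻ ω, G (fun i => ξ n i ω) z ∂P := by
  have hW : Measurable (fun ω => (fun i => ξ n i ω)) := measurable_pi_lambda _ fun i => hmeas n i
  have hZ := gw_measurable hmeas n
  have hZz : ∀ z : ℕ, MeasurableSet {ω | gw ξ n ω = z} := fun z =>
    hZ (measurableSet_singleton z)
  have hpt : ∀ ω, G (fun i => ξ n i ω) (gw ξ n ω)
      = ∑' z : ℕ, Set.indicator {ω' | gw ξ n ω' = z} (fun ω' => G (fun i => ξ n i ω') z) ω := by
    intro ω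
    rw [tsum_eq_single (gw ξ n ω) ?_]
    · rw [Set.indicator_of_mem (show ω ∈ {ω' | gw ξ n ω' = gw ξ n ω} from rfl)]
    · intro z hz
      rw [Set.indicator_of_notMem]
      exact fun hmem => hz (by rw [← hmem])
  calc ∫⁻ ω, G (fun i => ξ n i ω) (gw ξ n ω) ∂P
      = ∫⁻ ω, ∑' z : ℕ,
          Set.indicator {ω' | gw ξ n ω' = z} (fun ω' => G (fun i => ξ n i ω') z) ω ∂P :=
        lintegral_congr hpt
    _ = ∑' z : ℕ, ∫⁻ ω,
          Set.indicator {ω' | gw ξ n ω' = z} (fun ω' => G (fun i => ξ n i ω') z) ω ∂P :=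
        lintegral_tsum fun z =>
          (((hG z).comp hW).indicator (hZz z)).aemeasurable
    _ = _ := by
      refine tsum_congr fun z => ?_
      have hmul : ∀ ω, Set.indicator {ω' | gw ξ n ω' = z} (fun ω' => G (fun i => ξ n i ω') z) ω
          = Set.indicator {m : ℕ | m = z} (fun _ => (1:ℝ≥0∞)) (gw ξ n ω)
            * G (fun i => ξ n i ω) z := by
        intro ω
        by_cases hmem : gw ξ n ω = z
        · rw [Set.indicator_of_mem (show ω ∈ _ from hmem),
            Set.indicator_of_mem (show gw ξ n ω ∈ {m : ℕ | m = z} from hmem), one_mul]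
        · rw [Set.indicator_of_notMem (show ω ∉ _ from hmem),
            Set.indicator_of_notMem (show gw ξ n ω ∉ {m : ℕ | m = z} from hmem), zero_mul]
      have hu : Measurable (Set.indicator {m : ℕ | m = z} (fun _ => (1:ℝ≥0∞))) :=
        measurable_const.indicator (measurableSet_singleton z)
      have hind : IndepFun (fun ω => Set.indicator {m : ℕ | m = z} (fun _ => (1:ℝ≥0∞)) (gw ξ n ω))
          (fun ω => G (fun i => ξ n i ω) z) P :=
        (indep_past_row P hmeas hindep n).comp hu (hG z)
      calc ∫⁻ ω, Set.indicator {ω' | gw ξ n ω' = z} (fun ω' => G (fun i => ξ n i ω') z) ω ∂P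
          = ∫⁻ ω, Set.indicator {m : ℕ | m = z} (fun _ => (1:ℝ≥0∞)) (gw ξ n ω)
              * G (fun i => ξ n i ω) z ∂P := lintegral_congr hmul
        _ = (∫⁻ ω, Set.indicator {m : ℕ | m = z} (fun _ => (1:ℝ≥0∞)) (gw ξ n ω) ∂P)
              * ∫⁻ ω, G (fun i => ξ n i ω) z ∂P :=
            lintegral_mul_eq_lintegral_mul_lintegral_of_indepFun
              (hu.comp hZ) ((hG z).comp hW) hind
        _ = P {ω | gw ξ n ω = z} * ∫⁻ ω, G (fun i => ξ n i ω) z ∂P := by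
            congr 1
            have : ∀ ω, Set.indicator {m : ℕ | m = z} (fun _ => (1:ℝ≥0∞)) (gw ξ n ω)
                = Set.indicator {ω' | gw ξ n ω' = z} (fun _ => (1:ℝ≥0∞)) ω := by
              intro ω
              by_cases hmem : gw ξ n ω = z
              · rw [Set.indicator_of_mem (show gw ξ n ω ∈ {m : ℕ | m = z} from hmem),
                  Set.indicator_of_mem (show ω ∈ _ from hmem)]
              · rw [Set.indicator_of_notMem (show gw ξ n ω ∉ {m : ℕ | m = z} from hmem),
                  Set.indicator_of_notMem (show ω ∉ _ from hmem)]
            rw [lintegral_congr this, lintegral_indicator_const (hZz z), one_mul]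

lemma lintegral_gw_rpow_eq_tsum (P : Measure Ω) [IsProbabilityMeasure P] {ξ : ℕ → ℕ → Ω → ℕ}
    (hmeas : ∀ n i, Measurable (ξ n i))
    (hindep : iIndepFun (fun q : ℕ × ℕ => ξ q.1 q.2) P)
    (n : ℕ) (g : ℝ) :
    ∫⁻ ω, ((gw ξ n ω : ℕ) : ℝ≥0∞) ^ g ∂P
      = ∑' z : ℕ, P {ω | gw ξ n ω = z} * ((z : ℝ≥0∞)) ^ g := by
  have := cond_lintegral P hmeas hindep n (fun _ z => ((z : ℝ≥0∞)) ^ g)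
    (fun z => measurable_const)
  simpa using this

lemma lintegral_comp_eq {P : Measure Ω} {ξ : ℕ → ℕ → Ω → ℕ}
    (hid : ∀ n i, IdentDistrib (ξ n i) (ξ 0 0) P P)
    {u : ℕ → ℝ≥0∞} (hu : Measurable u) (n i : ℕ) :
    ∫⁻ ω, u (ξ n i ω) ∂P = ∫⁻ ω, u (ξ 0 0 ω) ∂P :=
  ((hid n i).comp hu).lintegral_eq

lemma lintegral_finset_sum_rpow_le {g : ℝ} (hg : 1 ≤ g) {P : Measure Ω} (f : ℕ → Ω → ℝ≥0∞)
    (hf : ∀ i, Measurable (f i)) (s : Finset ℕ) :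
    (∫⁻ ω, (∑ i ∈ s, f i ω) ^ g ∂P) ^ (1/g) ≤ ∑ i ∈ s, (∫⁻ ω, (f i ω) ^ g ∂P) ^ (1/g) := by
  classical
  have hg0 : (0:ℝ) < g := lt_of_lt_of_le one_pos hg
  induction s using Finset.induction_on with
  | empty =>
      simp only [Finset.sum_empty]
      rw [show ∫⁻ (_ω : Ω), (0:ℝ≥0∞) ^ g ∂P = 0 by
          rw [ENNReal.zero_rpow_of_pos hg0]; simp,
        ENNReal.zero_rpow_of_pos (by positivity : (0:ℝ) < 1/g)]
  | insert a s' ha ih =>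
      calc (∫⁻ ω, (∑ i ∈ insert a s', f i ω) ^ g ∂P) ^ (1/g)
          = (∫⁻ ω, ((f a + fun ω' => ∑ i ∈ s', f i ω') ω) ^ g ∂P) ^ (1/g) := by
            congr 1
            refine lintegral_congr fun ω => ?_
            rw [Finset.sum_insert ha]
            rfl
        _ ≤ (∫⁻ ω, (f a ω) ^ g ∂P) ^ (1/g)
              + (∫⁻ ω, (∑ i ∈ s', f i ω) ^ g ∂P) ^ (1/g) :=
            ENNReal.lintegral_Lp_add_le (hf a).aemeasurable
              (Finset.measurable_sum s' fun i _ => hf i).aemeasurable hg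
        _ ≤ _ := by
            rw [Finset.sum_insert ha]
            exact add_le_add le_rfl ih

lemma lintegral_sum_rpow_le_card {g : ℝ} (hg : 1 ≤ g) {P : Measure Ω} [IsProbabilityMeasure P]
    (f : ℕ → Ω → ℝ≥0∞) (hf : ∀ i, Measurable (f i)) {c : ℝ≥0∞}
    (hc : ∀ i, ∫⁻ ω, (f i ω) ^ g ∂P ≤ c) (z : ℕ) :
    ∫⁻ ω, (∑ i ∈ Finset.range z, f i ω) ^ g ∂P ≤ (z : ℝ≥0∞) ^ g * c := by
  have hg0 : g ≠ 0 := by positivity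
  have h1 := lintegral_finset_sum_rpow_le (P := P) hg f hf (Finset.range z)
  have h2 : ∑ i ∈ Finset.range z, (∫⁻ ω, (f i ω) ^ g ∂P) ^ (1/g)
      ≤ (z : ℝ≥0∞) * c ^ (1/g) := by
    calc ∑ i ∈ Finset.range z, (∫⁻ ω, (f i ω) ^ g ∂P) ^ (1/g)
        ≤ ∑ _i ∈ Finset.range z, c ^ (1/g) :=
          Finset.sum_le_sum fun i _ => ENNReal.rpow_le_rpow (hc i) (by positivity)
      _ = (z : ℝ≥0∞) * c ^ (1/g) := by
          rw [Finset.sum_const, Finset.card_range, nsmul_eq_mul]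
  have hgpos : (0:ℝ) ≤ g := by positivity
  have h3 := ENNReal.rpow_le_rpow (le_trans h1 h2) hgpos
  rw [one_div, ENNReal.rpow_inv_rpow hg0, ENNReal.mul_rpow_of_nonneg _ _ hgpos,
    ENNReal.rpow_inv_rpow hg0] at h3
  exact h3



lemma nat_cast_le_one_add_rpow {g : ℝ} (hg : 1 ≤ g) (x : ℕ) :
    ((x : ℕ) : ℝ≥0∞) ≤ 1 + ((x : ℕ) : ℝ≥0∞) ^ g := by
  rcases Nat.eq_zero_or_pos x with hx | hx
  · subst hx; simp
  · have h1 : (1 : ℝ≥0∞) ≤ ((x : ℕ) : ℝ≥0∞) := by exact_mod_cast hx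
    calc ((x : ℕ) : ℝ≥0∞) = ((x : ℕ) : ℝ≥0∞) ^ (1:ℝ) := (ENNReal.rpow_one _).symm
      _ ≤ ((x : ℕ) : ℝ≥0∞) ^ g := ENNReal.rpow_le_rpow_of_exponent_le h1 hg
      _ ≤ _ := le_add_self

/-- basic facts about the offspring distribution -/
lemma offspring_facts (P : Measure Ω) [IsProbabilityMeasure P] {ν : Ω → ℕ}
    (hν : Measurable ν) {α : ℝ} (hα : α = ∫ ω, ((ν ω : ℕ) : ℝ) ∂P)
    {h : ℝ} (hh : 1 < h) (hmom : ∫⁻ ω, ((ν ω : ℕ) : ℝ≥0∞) ^ h ∂P < ⊤) :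
    Integrable (fun ω => ((ν ω : ℕ) : ℝ)) P
      ∧ ∫⁻ ω, ((ν ω : ℕ) : ℝ≥0∞) ∂P = ENNReal.ofReal α ∧ 0 ≤ α := by
  have hmeascast : Measurable (fun ω => ((ν ω : ℕ) : ℝ≥0∞)) :=
    (measurable_from_top (f := fun k : ℕ => ((k : ℕ) : ℝ≥0∞))).comp hν
  have hmeascastR : Measurable (fun ω => ((ν ω : ℕ) : ℝ)) :=
    (measurable_from_top (f := fun k : ℕ => ((k : ℕ) : ℝ))).comp hν
  have afin : ∫⁻ ω, ((ν ω : ℕ) : ℝ≥0∞) ∂P < ⊤ := by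
    calc ∫⁻ ω, ((ν ω : ℕ) : ℝ≥0∞) ∂P
        ≤ ∫⁻ ω, (1 + ((ν ω : ℕ) : ℝ≥0∞) ^ h) ∂P :=
          lintegral_mono fun ω => nat_cast_le_one_add_rpow hh.le (ν ω)
      _ = 1 + ∫⁻ ω, ((ν ω : ℕ) : ℝ≥0∞) ^ h ∂P := by
          rw [lintegral_add_left measurable_const, lintegral_const, measure_univ, mul_one]
      _ < ⊤ := by
          exact ENNReal.add_lt_top.2 ⟨ENNReal.one_lt_top, hmom⟩
  have hofReal : ∀ ω, ENNReal.ofReal ((ν ω : ℕ) : ℝ) = ((ν ω : ℕ) : ℝ≥0∞) := fun ω =>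
    ENNReal.ofReal_natCast (ν ω)
  have hint : Integrable (fun ω => ((ν ω : ℕ) : ℝ)) P := by
    refine ⟨hmeascastR.aestronglyMeasurable, ?_⟩
    rw [hasFiniteIntegral_iff_ofReal (ae_of_all _ fun ω => by positivity)]
    simpa only [hofReal] using afin
  have hα0 : 0 ≤ α := hα ▸ integral_nonneg (fun ω => by positivity)
  refine ⟨hint, ?_, hα0⟩
  have := ofReal_integral_eq_lintegral_ofReal hint (ae_of_all _ fun ω => by positivity)
  rw [← hα] at this
  rw [this]
  exact lintegral_congr fun ω => (hofReal ω).symm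

/-- the first moment of the population is at most `a^n`. -/
lemma lintegral_gw_le (P : Measure Ω) [IsProbabilityMeasure P] {ξ : ℕ → ℕ → Ω → ℕ}
    (hmeas : ∀ n i, Measurable (ξ n i))
    (hindep : iIndepFun (fun q : ℕ × ℕ => ξ q.1 q.2) P)
    (hid : ∀ n i, IdentDistrib (ξ n i) (ξ 0 0) P P) :
    ∀ n : ℕ, ∫⁻ ω, ((gw ξ n ω : ℕ) : ℝ≥0∞) ∂P
      ≤ (∫⁻ ω, ((ξ 0 0 ω : ℕ) : ℝ≥0∞) ∂P) ^ n := by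
  intro n
  induction n with
  | zero => simp [gw]
  | succ n ih =>
    set a := ∫⁻ ω, ((ξ 0 0 ω : ℕ) : ℝ≥0∞) ∂P with ha
    have hG : ∀ z : ℕ, Measurable (fun w : ℕ → ℕ => ((∑ i ∈ Finset.range z, w i : ℕ) : ℝ≥0∞)) :=
      fun z => (measurable_from_top (f := fun k : ℕ => ((k:ℕ) : ℝ≥0∞))).comp
        (Finset.measurable_sum (Finset.range z) fun i _ => measurable_pi_apply i)
    have hcond := cond_lintegral P hmeas hindep n
      (fun w z => ((∑ i ∈ Finset.range z, w i : ℕ) : ℝ≥0∞)) hG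
    have hper : ∀ z : ℕ, ∫⁻ ω, ((∑ i ∈ Finset.range z, ξ n i ω : ℕ) : ℝ≥0∞) ∂P
        = (z : ℝ≥0∞) * a := by
      intro z
      have : ∀ ω, ((∑ i ∈ Finset.range z, ξ n i ω : ℕ) : ℝ≥0∞)
          = ∑ i ∈ Finset.range z, ((ξ n i ω : ℕ) : ℝ≥0∞) := fun ω => by push_cast; rfl
      rw [lintegral_congr this, lintegral_finset_sum (f := fun i ω => ((ξ n i ω : ℕ) : ℝ≥0∞))
        (Finset.range z) (fun i _ =>
          (measurable_from_top (f := fun k : ℕ => ((k:ℕ) : ℝ≥0∞))).comp (hmeas n i))]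
      have heach : ∀ i, ∫⁻ ω, ((ξ n i ω : ℕ) : ℝ≥0∞) ∂P = a := fun i =>
        lintegral_comp_eq hid (measurable_from_top (f := fun k : ℕ => ((k:ℕ) : ℝ≥0∞))) n i
      rw [Finset.sum_congr rfl fun i _ => heach i, Finset.sum_const, Finset.card_range,
        nsmul_eq_mul]
    calc ∫⁻ ω, ((gw ξ (n+1) ω : ℕ) : ℝ≥0∞) ∂P
        = ∑' z : ℕ, P {ω | gw ξ n ω = z}
            * ∫⁻ ω, ((∑ i ∈ Finset.range z, ξ n i ω : ℕ) : ℝ≥0∞) ∂P := hcond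
      _ = a * ∑' z : ℕ, P {ω | gw ξ n ω = z} * (z : ℝ≥0∞) := by
          rw [← ENNReal.tsum_mul_left]
          refine tsum_congr fun z => ?_
          rw [hper z]
          ring
      _ = a * ∫⁻ ω, ((gw ξ n ω : ℕ) : ℝ≥0∞) ∂P := by
          congr 1
          have := lintegral_gw_rpow_eq_tsum P hmeas hindep n 1
          simpa [ENNReal.rpow_one] using this.symm
      _ ≤ a * a ^ n := mul_le_mul_right ih a
      _ = a ^ (n + 1) := by rw [pow_succ, mul_comm]

/-- choosing the truncation level to make the big-jump part small. -/
lemma tail_small (P : Measure Ω) [IsProbabilityMeasure P] {ν : Ω → ℕ}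
    (hν : Measurable ν) {g : ℝ} (hg : 0 < g)
    (hfin : ∫⁻ ω, ((ν ω : ℕ) : ℝ≥0∞) ^ g ∂P < ⊤) {ε : ℝ≥0∞} (hε : 0 < ε) :
    ∃ M : ℕ, ∫⁻ ω, (((if ν ω ≤ M then 0 else ν ω) : ℕ) : ℝ≥0∞) ^ g ∂P ≤ ε := by
  classical
  set p : Ω → ℝ≥0∞ := fun ω => ((ν ω : ℕ) : ℝ≥0∞) ^ g with hp
  have hpmeas : Measurable p :=
    ((measurable_from_top (f := fun k : ℕ => ((k:ℕ) : ℝ≥0∞))).comp hν).pow_const _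
  set big : ℕ → Ω → ℝ≥0∞ :=
    fun M ω => (((if ν ω ≤ M then 0 else ν ω) : ℕ) : ℝ≥0∞) ^ g with hbig
  set small : ℕ → Ω → ℝ≥0∞ :=
    fun M ω => (((if ν ω ≤ M then ν ω else 0) : ℕ) : ℝ≥0∞) ^ g with hsmall
  have hbigmeas : ∀ M, Measurable (big M) := fun M =>
    ((measurable_from_top (f := fun k : ℕ =>
      (((if k ≤ M then 0 else k) : ℕ) : ℝ≥0∞))).comp hν).pow_const _
  have hsmallmeas : ∀ M, Measurable (small M) := fun M =>
    ((measurable_from_top (f := fun k : ℕ =>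
      (((if k ≤ M then k else 0) : ℕ) : ℝ≥0∞))).comp hν).pow_const _
  have hzero : (0 : ℝ≥0∞) ^ g = 0 := ENNReal.zero_rpow_of_pos hg
  have hadd : ∀ M ω, small M ω + big M ω = p ω := by
    intro M ω
    by_cases hc : ν ω ≤ M <;> simp [hsmall, hbig, hp, hc, hzero]
  have hsum : ∀ M : ℕ, ∫⁻ ω, small M ω ∂P + ∫⁻ ω, big M ω ∂P = ∫⁻ ω, p ω ∂P := by
    intro M
    rw [← lintegral_add_left (hsmallmeas M)]
    exact lintegral_congr (hadd M)
  have hmono : Monotone small := by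
    intro M M' hMM ω
    by_cases hc : ν ω ≤ M
    · simp only [hsmall, if_pos hc, if_pos (le_trans hc hMM)]
      exact le_rfl
    · simp only [hsmall, if_neg hc]
      rw [Nat.cast_zero, hzero]
      exact zero_le
  have hlim : ⨆ M : ℕ, ∫⁻ ω, small M ω ∂P = ∫⁻ ω, p ω ∂P := by
    rw [← lintegral_iSup hsmallmeas (fun M M' hMM ω => hmono hMM ω)]
    refine lintegral_congr fun ω => ?_
    refine le_antisymm (iSup_le fun M => ?_) ?_
    · rw [← hadd M ω]; exact le_self_add
    · refine le_trans (le_of_eq ?_) (le_iSup _ (ν ω))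
      simp [hsmall, hp]
  rcases le_or_gt (∫⁻ ω, p ω ∂P) ε with hcase | hcase
  · refine ⟨0, le_trans ?_ hcase⟩
    refine le_trans (le_of_eq rfl) ?_
    rw [← hsum 0]
    exact le_add_self
  · rcases eq_top_or_lt_top ε with hεtop | hεfin
    · exact ⟨0, by rw [hεtop]; exact le_top⟩
    have h1 : ∫⁻ ω, p ω ∂P - ε < ⨆ M : ℕ, ∫⁻ ω, small M ω ∂P := by
      rw [hlim]
      exact ENNReal.sub_lt_self hfin.ne (by intro h0; rw [h0] at hcase; exact (not_lt_of_ge zero_le) hcase) hε.ne'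
    obtain ⟨M, hM⟩ := lt_iSup_iff.1 h1
    refine ⟨M, ?_⟩
    have h2 : ∫⁻ ω, p ω ∂P < ∫⁻ ω, small M ω ∂P + ε := by
      rw [← ENNReal.sub_lt_iff_lt_right hεfin.ne hcase.le]
      exact hM
    have h3 : ∫⁻ ω, small M ω ∂P + ∫⁻ ω, big M ω ∂P
        < ∫⁻ ω, small M ω ∂P + ε := by rw [hsum M]; exact h2
    exact le_of_lt (lt_of_add_lt_add_left h3)


lemma small_sum_bound (P : Measure Ω) [IsProbabilityMeasure P] {ξ : ℕ → ℕ → Ω → ℕ}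
    (hmeas : ∀ n i, Measurable (ξ n i))
    (hindep : iIndepFun (fun q : ℕ × ℕ => ξ q.1 q.2) P)
    (hid : ∀ n i, IdentDistrib (ξ n i) (ξ 0 0) P P)
    {α : ℝ} (hα : α = ∫ ω, ((ξ 0 0 ω : ℕ) : ℝ) ∂P)
    (hint : Integrable (fun ω => ((ξ 0 0 ω : ℕ) : ℝ)) P)
    {t : ℝ} (ht : 0 < t) (M : ℕ) {g : ℝ} (hg : 1 ≤ g) (n z : ℕ) (hz : 1 ≤ z) :
    ∫⁻ ω, ((∑ i ∈ Finset.range z, min (ξ n i ω) M : ℕ) : ℝ≥0∞) ^ g ∂P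
      ≤ ENNReal.ofReal ((α + t) * z) ^ g
        + ENNReal.ofReal ((M : ℝ) * z) ^ g
          * (ENNReal.ofReal ((M:ℝ)^2 / t^2) * (z : ℝ≥0∞)⁻¹) := by
  have hg0 : (0:ℝ) ≤ g := le_trans zero_le_one hg
  have hα0 : 0 ≤ α := hα ▸ integral_nonneg (fun ω => by positivity)
  have hzR : (0:ℝ) < z := by exact_mod_cast hz
  set u : ℕ → ℝ := fun k => ((min k M : ℕ) : ℝ) with hu
  have humeas : Measurable u := measurable_from_top
  set X : ℕ → Ω → ℝ := fun i ω => u (ξ n i ω) with hX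
  have hXmeas : ∀ i, Measurable (X i) := fun i => humeas.comp (hmeas n i)
  have hXnn : ∀ i ω, 0 ≤ X i ω := fun i ω => by positivity
  have hXbd : ∀ i ω, ‖X i ω‖ ≤ (M:ℝ) := by
    intro i ω
    rw [Real.norm_eq_abs, abs_of_nonneg (hXnn i ω)]
    show ((min (ξ n i ω) M : ℕ) : ℝ) ≤ (M:ℝ)
    exact_mod_cast min_le_right (ξ n i ω) M
  have hXL2 : ∀ i, MemLp (X i) 2 P :=
    fun i => (memLp_top_of_bound (hXmeas i).aestronglyMeasurable _
      (ae_of_all _ (hXbd i))).mono_exponent le_top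
  have hXint : ∀ i, Integrable (X i) P := fun i => (hXL2 i).integrable one_le_two
  set SR : Ω → ℝ := fun ω => ∑ i ∈ Finset.range z, X i ω with hSR
  have hSRfun : SR = ∑ i ∈ Finset.range z, X i := by
    funext ω
    rw [Finset.sum_apply]
  have hSRmeas : Measurable SR := Finset.measurable_sum _ fun i _ => hXmeas i
  have hSRL2 : MemLp SR 2 P := by
    rw [hSRfun]
    exact memLp_finsetSum' _ fun i _ => hXL2 i
  set μM : ℝ := ∫ ω, u (ξ 0 0 ω) ∂P with hμM
  have hEX : ∀ i, ∫ ω, X i ω ∂P = μM := fun i => ((hid n i).comp humeas).integral_eq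
  have huint : Integrable (fun ω => u (ξ 0 0 ω)) P := by
    refine hint.mono (humeas.comp (hmeas 0 0)).aestronglyMeasurable (ae_of_all _ fun ω => ?_)
    rw [Real.norm_eq_abs, Real.norm_eq_abs, abs_of_nonneg (by positivity),
      abs_of_nonneg (by positivity)]
    show ((min (ξ 0 0 ω) M : ℕ) : ℝ) ≤ ((ξ 0 0 ω : ℕ) : ℝ)
    exact_mod_cast min_le_left (ξ 0 0 ω) M
  have hμMle : μM ≤ α := by
    rw [hμM, hα]
    refine integral_mono huint hint fun ω => ?_
    show ((min (ξ 0 0 ω) M : ℕ) : ℝ) ≤ ((ξ 0 0 ω : ℕ) : ℝ)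
    exact_mod_cast min_le_left (ξ 0 0 ω) M
  have hESR : ∫ ω, SR ω ∂P = z * μM := by
    rw [hSR, integral_finset_sum _ (fun i _ => hXint i),
      Finset.sum_congr rfl fun i _ => hEX i, Finset.sum_const, Finset.card_range, nsmul_eq_mul]
  have hpair : Set.Pairwise ↑(Finset.range z) (fun i j => IndepFun (X i) (X j) P) := by
    intro i _ j _ hij
    exact (hindep.indepFun (show ((n,i) : ℕ×ℕ) ≠ (n,j) by simpa using hij)).comp humeas humeas
  have hvar_le : variance SR P ≤ z * (M:ℝ)^2 := by
    rw [hSRfun, IndepFun.variance_sum (fun i _ => hXL2 i) hpair]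
    calc ∑ i ∈ Finset.range z, variance (X i) P ≤ ∑ _i ∈ Finset.range z, (M:ℝ)^2 := by
          refine Finset.sum_le_sum fun i _ => ?_
          refine le_trans (variance_le_expectation_sq (hXmeas i).aestronglyMeasurable) ?_
          calc ∫ ω, (X i ^ 2) ω ∂P ≤ ∫ _ω, (M:ℝ)^2 ∂P := by
                refine integral_mono (hXL2 i).integrable_sq (integrable_const _) fun ω => ?_
                have h1 := hXbd i ω
                rw [Real.norm_eq_abs] at h1
                have h2 := hXnn i ω
                have h3 : X i ω ≤ (M:ℝ) := (abs_le.1 h1).2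
                simp only [Pi.pow_apply]
                nlinarith
            _ = (M:ℝ)^2 := by simp
      _ = z * (M:ℝ)^2 := by rw [Finset.sum_const, Finset.card_range, nsmul_eq_mul]
  have hcz : (0:ℝ) < t * z := by positivity
  have hcheb := meas_ge_le_variance_div_sq (X := SR) hSRL2 hcz
  have hsub : {ω | (α + t) * z ≤ SR ω} ⊆ {ω | t * z ≤ |SR ω - ∫ ω', SR ω' ∂P|} := by
    intro ω hω
    simp only [Set.mem_setOf_eq] at hω ⊢
    rw [hESR]
    have h1 : (z:ℝ) * μM ≤ z * α := mul_le_mul_of_nonneg_left hμMle hzR.le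
    have h2 : t * z ≤ SR ω - z * μM := by nlinarith
    exact le_trans h2 (le_abs_self _)
  have hkey : variance SR P / (t*z)^2 ≤ (M:ℝ)^2/t^2 * (z:ℝ)⁻¹ := by
    rw [div_le_iff₀ (by positivity : (0:ℝ) < (t*z)^2)]
    have heq : (M:ℝ)^2/t^2 * (z:ℝ)⁻¹ * (t*z)^2 = z * (M:ℝ)^2 := by
      field_simp
    rw [heq]
    exact hvar_le
  have hPev : P {ω | (α + t) * z ≤ SR ω}
      ≤ ENNReal.ofReal ((M:ℝ)^2 / t^2) * (z : ℝ≥0∞)⁻¹ := by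
    calc P {ω | (α + t) * z ≤ SR ω}
        ≤ P {ω | t * z ≤ |SR ω - ∫ ω', SR ω' ∂P|} := measure_mono hsub
      _ ≤ ENNReal.ofReal (variance SR P / (t*z)^2) := hcheb
      _ ≤ ENNReal.ofReal ((M:ℝ)^2/t^2 * (z:ℝ)⁻¹) := ENNReal.ofReal_le_ofReal hkey
      _ = _ := by
          rw [ENNReal.ofReal_mul (by positivity), ENNReal.ofReal_inv_of_pos hzR,
            ENNReal.ofReal_natCast]
  have hEv : MeasurableSet {ω | (α + t) * z ≤ SR ω} := measurableSet_le measurable_const hSRmeas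
  have hpt : ∀ ω, ((∑ i ∈ Finset.range z, min (ξ n i ω) M : ℕ) : ℝ≥0∞) ^ g
      ≤ ENNReal.ofReal ((α + t) * z) ^ g
        + ENNReal.ofReal ((M:ℝ) * z) ^ g
          * Set.indicator {ω' | (α + t) * z ≤ SR ω'} (fun _ => (1:ℝ≥0∞)) ω := by
    intro ω
    have hcast : ((∑ i ∈ Finset.range z, min (ξ n i ω) M : ℕ) : ℝ≥0∞)
        = ENNReal.ofReal (SR ω) := by
      rw [← ENNReal.ofReal_natCast]
      congr 1
      rw [hSR]
      simp only [hX, hu]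
      push_cast
      rfl
    by_cases hev : (α + t) * z ≤ SR ω
    · have hnat : (∑ i ∈ Finset.range z, min (ξ n i ω) M : ℕ) ≤ z * M := by
        calc (∑ i ∈ Finset.range z, min (ξ n i ω) M : ℕ) ≤ ∑ _i ∈ Finset.range z, M :=
              Finset.sum_le_sum fun i _ => min_le_right _ _
          _ = z * M := by rw [Finset.sum_const, Finset.card_range, smul_eq_mul]
      have hb : ((∑ i ∈ Finset.range z, min (ξ n i ω) M : ℕ) : ℝ≥0∞)
          ≤ ENNReal.ofReal ((M:ℝ) * z) := by
        calc ((∑ i ∈ Finset.range z, min (ξ n i ω) M : ℕ) : ℝ≥0∞) ≤ ((z * M : ℕ) : ℝ≥0∞) := by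
              exact_mod_cast hnat
          _ = ENNReal.ofReal ((M:ℝ) * z) := by
              rw [← ENNReal.ofReal_natCast]
              congr 1
              push_cast
              ring
      rw [Set.indicator_of_mem (show ω ∈ {ω' | (α + t) * ↑z ≤ SR ω'} from hev), mul_one]
      exact le_trans (ENNReal.rpow_le_rpow hb hg0) le_add_self
    · rw [Set.indicator_of_notMem (show ω ∉ {ω' | (α + t) * ↑z ≤ SR ω'} from hev), mul_zero,
        add_zero, hcast]
      exact ENNReal.rpow_le_rpow (ENNReal.ofReal_le_ofReal (le_of_not_ge hev)) hg0
  calc ∫⁻ ω, ((∑ i ∈ Finset.range z, min (ξ n i ω) M : ℕ) : ℝ≥0∞) ^ g ∂P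
      ≤ ∫⁻ ω, (ENNReal.ofReal ((α + t) * z) ^ g
          + ENNReal.ofReal ((M:ℝ) * z) ^ g
            * Set.indicator {ω' | (α + t) * z ≤ SR ω'} (fun _ => (1:ℝ≥0∞)) ω) ∂P :=
        lintegral_mono hpt
    _ = ENNReal.ofReal ((α + t) * z) ^ g
          + ENNReal.ofReal ((M:ℝ) * z) ^ g * P {ω | (α + t) * z ≤ SR ω} := by
        rw [lintegral_add_left measurable_const, lintegral_const, measure_univ, mul_one,
          lintegral_const_mul _ (measurable_const.indicator hEv), lintegral_indicator_const hEv 1, one_mul]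
    _ ≤ _ := add_le_add le_rfl (mul_le_mul_right hPev _)


lemma nat_rpow_mono_exp {x : ℕ} {g g' : ℝ} (hg : 0 < g) (hgg : g ≤ g') :
    ((x : ℕ) : ℝ≥0∞) ^ g ≤ ((x : ℕ) : ℝ≥0∞) ^ g' := by
  rcases Nat.eq_zero_or_pos x with hx | hx
  · subst hx
    simp only [Nat.cast_zero]
    rw [ENNReal.zero_rpow_of_pos hg, ENNReal.zero_rpow_of_pos (lt_of_lt_of_le hg hgg)]
  · exact ENNReal.rpow_le_rpow_of_exponent_le (by exact_mod_cast hx) hgg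

lemma nat_rpow_le_self {x : ℕ} {g : ℝ} (hg : 0 < g) (hg1 : g ≤ 1) :
    ((x : ℕ) : ℝ≥0∞) ^ g ≤ ((x : ℕ) : ℝ≥0∞) := by
  have := nat_rpow_mono_exp (x := x) hg hg1
  rwa [ENNReal.rpow_one] at this

lemma per_z_bound (P : Measure Ω) [IsProbabilityMeasure P] {ξ : ℕ → ℕ → Ω → ℕ}
    (hmeas : ∀ n i, Measurable (ξ n i))
    (hindep : iIndepFun (fun q : ℕ × ℕ => ξ q.1 q.2) P)
    (hid : ∀ n i, IdentDistrib (ξ n i) (ξ 0 0) P P)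
    {α : ℝ} (hα : α = ∫ ω, ((ξ 0 0 ω : ℕ) : ℝ) ∂P)
    (hint : Integrable (fun ω => ((ξ 0 0 ω : ℕ) : ℝ)) P)
    {t : ℝ} (ht : 0 < t) (M : ℕ) {g hh' : ℝ} (hg : 1 ≤ g) (hgh : g ≤ hh')
    (n z : ℕ) :
    ∫⁻ ω, ((∑ i ∈ Finset.range z, ξ n i ω : ℕ) : ℝ≥0∞) ^ g ∂P
      ≤ (ENNReal.ofReal ((1+t)*(α + t)) ^ g
          + ENNReal.ofReal (1+1/t) ^ hh'
            * ∫⁻ ω, (((if ξ 0 0 ω ≤ M then 0 else ξ 0 0 ω) : ℕ) : ℝ≥0∞) ^ hh' ∂P)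
          * (z:ℝ≥0∞) ^ g
        + (ENNReal.ofReal (1+t) ^ g * ENNReal.ofReal (M:ℝ) ^ g
            * ENNReal.ofReal ((M:ℝ)^2 / t^2)) * (z:ℝ≥0∞) ^ (g-1) := by
  have hgpos : (0:ℝ) < g := lt_of_lt_of_le one_pos hg
  have hg0 : (0:ℝ) ≤ g := hgpos.le
  have hα0 : 0 ≤ α := hα ▸ integral_nonneg fun ω => by positivity
  rcases Nat.eq_zero_or_pos z with hz0 | hz
  · subst hz0
    simp only [Finset.range_zero, Finset.sum_empty, Nat.cast_zero,
      ENNReal.zero_rpow_of_pos hgpos, lintegral_zero]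
    exact zero_le
  -- notation
  set δ := ∫⁻ ω, (((if ξ 0 0 ω ≤ M then 0 else ξ 0 0 ω) : ℕ) : ℝ≥0∞) ^ hh' ∂P with hδ
  have hzR : (0:ℝ) < z := by exact_mod_cast hz
  have hdecomp : ∀ ω, ((∑ i ∈ Finset.range z, ξ n i ω : ℕ) : ℝ≥0∞)
      = ((∑ i ∈ Finset.range z, (if ξ n i ω ≤ M then ξ n i ω else 0) : ℕ) : ℝ≥0∞)
        + ((∑ i ∈ Finset.range z, (if ξ n i ω ≤ M then 0 else ξ n i ω) : ℕ) : ℝ≥0∞) := by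
    intro ω
    rw [← Nat.cast_add]
    congr 1
    rw [← Finset.sum_add_distrib]
    refine Finset.sum_congr rfl fun i _ => ?_
    by_cases hc : ξ n i ω ≤ M <;> simp [hc]
  have hmeas_small : Measurable (fun ω =>
      ((∑ i ∈ Finset.range z, (if ξ n i ω ≤ M then ξ n i ω else 0) : ℕ) : ℝ≥0∞) ^ g) := by
    refine Measurable.pow_const ?_ _
    refine (measurable_from_top (f := fun k : ℕ => ((k:ℕ) : ℝ≥0∞))).comp ?_
    refine measurable_sum_range' measurable_const fun i => ?_
    exact (measurable_from_top (f := fun k : ℕ => (if k ≤ M then k else 0))).comp (hmeas n i)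
  have hmeas_big_i : ∀ i, Measurable (fun ω =>
      (((if ξ n i ω ≤ M then 0 else ξ n i ω) : ℕ) : ℝ≥0∞)) := fun i =>
    (measurable_from_top (f := fun k : ℕ => (((if k ≤ M then 0 else k) : ℕ) : ℝ≥0∞))).comp
      (hmeas n i)
  -- splitting
  have hsplit : ∀ ω, ((∑ i ∈ Finset.range z, ξ n i ω : ℕ) : ℝ≥0∞) ^ g
      ≤ ENNReal.ofReal (1+t) ^ g
          * ((∑ i ∈ Finset.range z, (if ξ n i ω ≤ M then ξ n i ω else 0) : ℕ) : ℝ≥0∞) ^ g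
        + ENNReal.ofReal (1+1/t) ^ g
          * ((∑ i ∈ Finset.range z, (if ξ n i ω ≤ M then 0 else ξ n i ω) : ℕ) : ℝ≥0∞) ^ g := by
    intro ω
    rw [hdecomp ω]
    exact split_rpow ht hg0 _ _
  have hIsmall : ∫⁻ ω,
      ((∑ i ∈ Finset.range z, (if ξ n i ω ≤ M then ξ n i ω else 0) : ℕ) : ℝ≥0∞) ^ g ∂P
      ≤ ENNReal.ofReal ((α + t) * z) ^ g
        + ENNReal.ofReal ((M : ℝ) * z) ^ g
          * (ENNReal.ofReal ((M:ℝ)^2 / t^2) * (z : ℝ≥0∞)⁻¹) := by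
    refine le_trans (lintegral_mono fun ω => ?_) (small_sum_bound P hmeas hindep hid hα hint ht M hg n z hz)
    refine ENNReal.rpow_le_rpow ?_ hg0
    have : (∑ i ∈ Finset.range z, (if ξ n i ω ≤ M then ξ n i ω else 0) : ℕ)
        ≤ (∑ i ∈ Finset.range z, min (ξ n i ω) M : ℕ) := by
      refine Finset.sum_le_sum fun i _ => ?_
      by_cases hc : ξ n i ω ≤ M
      · simp [hc, min_eq_left hc]
      · simp [hc]
    exact_mod_cast this
  have hIbig : ∫⁻ ω,
      ((∑ i ∈ Finset.range z, (if ξ n i ω ≤ M then 0 else ξ n i ω) : ℕ) : ℝ≥0∞) ^ g ∂P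
      ≤ (z:ℝ≥0∞) ^ g * δ := by
    have hcast : ∀ ω, ((∑ i ∈ Finset.range z, (if ξ n i ω ≤ M then 0 else ξ n i ω) : ℕ) : ℝ≥0∞)
        = ∑ i ∈ Finset.range z, (((if ξ n i ω ≤ M then 0 else ξ n i ω) : ℕ) : ℝ≥0∞) :=
      fun ω => by push_cast; rfl
    have := lintegral_sum_rpow_le_card (P := P) hg
      (f := fun i ω => (((if ξ n i ω ≤ M then 0 else ξ n i ω) : ℕ) : ℝ≥0∞)) hmeas_big_i
      (c := δ) ?_ z
    · refine le_trans (le_of_eq ?_) this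
      exact lintegral_congr fun ω => by rw [hcast ω]
    · intro i
      have htrans := lintegral_comp_eq hid
        (u := fun k : ℕ => (((if k ≤ M then 0 else k) : ℕ) : ℝ≥0∞) ^ g) measurable_from_top n i
      calc ∫⁻ ω, (((if ξ n i ω ≤ M then 0 else ξ n i ω) : ℕ) : ℝ≥0∞) ^ g ∂P
          = ∫⁻ ω, (((if ξ 0 0 ω ≤ M then 0 else ξ 0 0 ω) : ℕ) : ℝ≥0∞) ^ g ∂P := htrans
        _ ≤ δ := lintegral_mono fun ω => nat_rpow_mono_exp hgpos hgh
  -- put things together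
  have hmain : ∫⁻ ω, ((∑ i ∈ Finset.range z, ξ n i ω : ℕ) : ℝ≥0∞) ^ g ∂P
      ≤ ENNReal.ofReal (1+t) ^ g
          * (ENNReal.ofReal ((α + t) * z) ^ g
            + ENNReal.ofReal ((M : ℝ) * z) ^ g
              * (ENNReal.ofReal ((M:ℝ)^2 / t^2) * (z : ℝ≥0∞)⁻¹))
        + ENNReal.ofReal (1+1/t) ^ g * ((z:ℝ≥0∞) ^ g * δ) := by
    calc ∫⁻ ω, ((∑ i ∈ Finset.range z, ξ n i ω : ℕ) : ℝ≥0∞) ^ g ∂P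
        ≤ ∫⁻ ω, (ENNReal.ofReal (1+t) ^ g
            * ((∑ i ∈ Finset.range z, (if ξ n i ω ≤ M then ξ n i ω else 0) : ℕ) : ℝ≥0∞) ^ g
          + ENNReal.ofReal (1+1/t) ^ g
            * ((∑ i ∈ Finset.range z, (if ξ n i ω ≤ M then 0 else ξ n i ω) : ℕ) : ℝ≥0∞) ^ g) ∂P :=
          lintegral_mono hsplit
      _ = ENNReal.ofReal (1+t) ^ g
            * ∫⁻ ω, ((∑ i ∈ Finset.range z,
                (if ξ n i ω ≤ M then ξ n i ω else 0) : ℕ) : ℝ≥0∞) ^ g ∂P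
          + ENNReal.ofReal (1+1/t) ^ g
            * ∫⁻ ω, ((∑ i ∈ Finset.range z,
                (if ξ n i ω ≤ M then 0 else ξ n i ω) : ℕ) : ℝ≥0∞) ^ g ∂P := by
          rw [lintegral_add_left (hmeas_small.const_mul _),
            lintegral_const_mul _ hmeas_small]
          congr 1
          refine lintegral_const_mul _ ?_
          refine Measurable.pow_const ?_ _
          refine (measurable_from_top (f := fun k : ℕ => ((k:ℕ) : ℝ≥0∞))).comp ?_
          refine measurable_sum_range' measurable_const fun i => ?_
          exact (measurable_from_top (f := fun k : ℕ => (if k ≤ M then 0 else k))).comp (hmeas n i)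
      _ ≤ _ := add_le_add (mul_le_mul_right hIsmall _) (mul_le_mul_right hIbig _)
  refine le_trans hmain ?_
  have hz0' : ((z:ℕ) : ℝ≥0∞) ≠ 0 := Nat.cast_ne_zero.2 hz.ne'
  have hzt : ((z:ℕ) : ℝ≥0∞) ≠ ⊤ := ENNReal.natCast_ne_top z
  have hA : ENNReal.ofReal ((α + t) * z) = ENNReal.ofReal (α + t) * (z:ℝ≥0∞) := by
    rw [ENNReal.ofReal_mul (by positivity), ENNReal.ofReal_natCast]
  have hMz : ENNReal.ofReal ((M:ℝ) * z) = ENNReal.ofReal (M:ℝ) * (z:ℝ≥0∞) := by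
    rw [ENNReal.ofReal_mul (by positivity), ENNReal.ofReal_natCast, ENNReal.ofReal_natCast]
  have hzg1 : (z:ℝ≥0∞) ^ (g-1) = (z:ℝ≥0∞) ^ g * (z:ℝ≥0∞)⁻¹ := by
    rw [sub_eq_add_neg, ENNReal.rpow_add _ _ hz0' hzt, ENNReal.rpow_neg, ENNReal.rpow_one]
  have hc1 : ENNReal.ofReal (1+t) ^ g * ENNReal.ofReal (α + t) ^ g
      = ENNReal.ofReal ((1+t)*(α + t)) ^ g := by
    rw [← ENNReal.mul_rpow_of_nonneg _ _ hg0, ← ENNReal.ofReal_mul (by positivity)]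
  have hone_le : (1:ℝ≥0∞) ≤ ENNReal.ofReal (1+1/t) := by
    rw [show (1:ℝ≥0∞) = ENNReal.ofReal 1 from ENNReal.ofReal_one.symm]
    exact ENNReal.ofReal_le_ofReal (by nlinarith [one_div_pos.2 ht])
  have hc2 : ENNReal.ofReal (1+1/t) ^ g ≤ ENNReal.ofReal (1+1/t) ^ hh' :=
    ENNReal.rpow_le_rpow_of_exponent_le hone_le hgh
  calc ENNReal.ofReal (1+t) ^ g
          * (ENNReal.ofReal ((α + t) * z) ^ g
            + ENNReal.ofReal ((M : ℝ) * z) ^ g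
              * (ENNReal.ofReal ((M:ℝ)^2 / t^2) * (z : ℝ≥0∞)⁻¹))
        + ENNReal.ofReal (1+1/t) ^ g * ((z:ℝ≥0∞) ^ g * δ)
      = ENNReal.ofReal ((1+t)*(α + t)) ^ g * (z:ℝ≥0∞) ^ g
        + (ENNReal.ofReal (1+t) ^ g * ENNReal.ofReal (M:ℝ) ^ g
            * ENNReal.ofReal ((M:ℝ)^2 / t^2)) * (z:ℝ≥0∞) ^ (g-1)
        + ENNReal.ofReal (1+1/t) ^ g * δ * (z:ℝ≥0∞) ^ g := by
        rw [hA, hMz, ENNReal.mul_rpow_of_nonneg _ _ hg0, ENNReal.mul_rpow_of_nonneg _ _ hg0,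
          hzg1, ← hc1]
        ring
    _ ≤ ENNReal.ofReal ((1+t)*(α + t)) ^ g * (z:ℝ≥0∞) ^ g
        + (ENNReal.ofReal (1+t) ^ g * ENNReal.ofReal (M:ℝ) ^ g
            * ENNReal.ofReal ((M:ℝ)^2 / t^2)) * (z:ℝ≥0∞) ^ (g-1)
        + ENNReal.ofReal (1+1/t) ^ hh' * δ * (z:ℝ≥0∞) ^ g :=
        add_le_add le_rfl (mul_le_mul_left (mul_le_mul_left hc2 δ) _)
    _ = _ := by ring


lemma moment_step (P : Measure Ω) [IsProbabilityMeasure P] {ξ : ℕ → ℕ → Ω → ℕ}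
    (hmeas : ∀ n i, Measurable (ξ n i))
    (hindep : iIndepFun (fun q : ℕ × ℕ => ξ q.1 q.2) P)
    {g : ℝ} {B C : ℝ≥0∞}
    (hBC : ∀ n z : ℕ, ∫⁻ ω, ((∑ i ∈ Finset.range z, ξ n i ω : ℕ) : ℝ≥0∞) ^ g ∂P
        ≤ B * (z:ℝ≥0∞) ^ g + C * (z:ℝ≥0∞) ^ (g-1)) (n : ℕ) :
    ∫⁻ ω, ((gw ξ (n+1) ω : ℕ) : ℝ≥0∞) ^ g ∂P
      ≤ B * ∫⁻ ω, ((gw ξ n ω : ℕ) : ℝ≥0∞) ^ g ∂P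
        + C * ∫⁻ ω, ((gw ξ n ω : ℕ) : ℝ≥0∞) ^ (g-1) ∂P := by
  have hG : ∀ z : ℕ, Measurable
      (fun w : ℕ → ℕ => ((∑ i ∈ Finset.range z, w i : ℕ) : ℝ≥0∞) ^ g) := fun z =>
    Measurable.pow_const ((measurable_from_top (f := fun k : ℕ => ((k:ℕ) : ℝ≥0∞))).comp
      (Finset.measurable_sum (Finset.range z) fun i _ => measurable_pi_apply i)) _
  have hcond := cond_lintegral P hmeas hindep n
    (fun w z => ((∑ i ∈ Finset.range z, w i : ℕ) : ℝ≥0∞) ^ g) hG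
  calc ∫⁻ ω, ((gw ξ (n+1) ω : ℕ) : ℝ≥0∞) ^ g ∂P
      = ∑' z : ℕ, P {ω | gw ξ n ω = z}
          * ∫⁻ ω, ((∑ i ∈ Finset.range z, ξ n i ω : ℕ) : ℝ≥0∞) ^ g ∂P := hcond
    _ ≤ ∑' z : ℕ, P {ω | gw ξ n ω = z}
          * (B * (z:ℝ≥0∞) ^ g + C * (z:ℝ≥0∞) ^ (g-1)) :=
        ENNReal.tsum_le_tsum fun z => mul_le_mul_right (hBC n z) _
    _ = B * ∑' z : ℕ, P {ω | gw ξ n ω = z} * (z:ℝ≥0∞) ^ g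
          + C * ∑' z : ℕ, P {ω | gw ξ n ω = z} * (z:ℝ≥0∞) ^ (g-1) := by
        rw [← ENNReal.tsum_mul_left, ← ENNReal.tsum_mul_left, ← ENNReal.tsum_add]
        exact tsum_congr fun z => by ring
    _ = _ := by
        rw [← lintegral_gw_rpow_eq_tsum P hmeas hindep n g,
          ← lintegral_gw_rpow_eq_tsum P hmeas hindep n (g-1)]

lemma gw_moment_base (P : Measure Ω) [IsProbabilityMeasure P] {ξ : ℕ → ℕ → Ω → ℕ}
    (hmeas : ∀ n i, Measurable (ξ n i))
    (hindep : iIndepFun (fun q : ℕ × ℕ => ξ q.1 q.2) P)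
    (hid : ∀ n i, IdentDistrib (ξ n i) (ξ 0 0) P P)
    {α : ℝ} (ha : ∫⁻ ω, ((ξ 0 0 ω : ℕ) : ℝ≥0∞) ∂P = ENNReal.ofReal α)
    {g : ℝ} (hg0 : 0 < g) (hg1 : g ≤ 1) (n : ℕ) :
    ∫⁻ ω, ((gw ξ n ω : ℕ) : ℝ≥0∞) ^ g ∂P ≤ ENNReal.ofReal (max α (1/2)) ^ n := by
  calc ∫⁻ ω, ((gw ξ n ω : ℕ) : ℝ≥0∞) ^ g ∂P
      ≤ ∫⁻ ω, ((gw ξ n ω : ℕ) : ℝ≥0∞) ∂P :=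
        lintegral_mono fun ω => nat_rpow_le_self hg0 hg1
    _ ≤ (∫⁻ ω, ((ξ 0 0 ω : ℕ) : ℝ≥0∞) ∂P) ^ n := lintegral_gw_le P hmeas hindep hid n
    _ = ENNReal.ofReal α ^ n := by rw [ha]
    _ ≤ ENNReal.ofReal (max α (1/2)) ^ n :=
        pow_le_pow_left' (ENNReal.ofReal_le_ofReal (le_max_left _ _)) n

lemma gw_moment_geom (P : Measure Ω) [IsProbabilityMeasure P] {ξ : ℕ → ℕ → Ω → ℕ}
    (hmeas : ∀ n i, Measurable (ξ n i))
    (hindep : iIndepFun (fun q : ℕ × ℕ => ξ q.1 q.2) P)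
    (hid : ∀ n i, IdentDistrib (ξ n i) (ξ 0 0) P P)
    {α : ℝ} (hα : α = ∫ ω, ((ξ 0 0 ω : ℕ) : ℝ) ∂P) (hsub : α < 1)
    {h : ℝ} (hh : 1 < h) (hmom : ∫⁻ ω, ((ξ 0 0 ω : ℕ) : ℝ≥0∞) ^ h ∂P < ⊤) :
    ∀ k : ℕ, ∀ g : ℝ, 0 < g → g ≤ h → g ≤ k + 1 →
      ∃ d c : ℝ, 1 ≤ d ∧ 1/2 ≤ c ∧ c < 1 ∧
        ∀ n : ℕ, ∫⁻ ω, ((gw ξ n ω : ℕ) : ℝ≥0∞) ^ g ∂P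
          ≤ ENNReal.ofReal d * ENNReal.ofReal c ^ n := by
  obtain ⟨hint, ha, hα0⟩ := offspring_facts P (hmeas 0 0) hα hh hmom
  have hbase : ∀ g : ℝ, 0 < g → g ≤ 1 →
      ∃ d c : ℝ, 1 ≤ d ∧ 1/2 ≤ c ∧ c < 1 ∧
        ∀ n : ℕ, ∫⁻ ω, ((gw ξ n ω : ℕ) : ℝ≥0∞) ^ g ∂P
          ≤ ENNReal.ofReal d * ENNReal.ofReal c ^ n := by
    intro g hg0 hg1
    refine ⟨1, max α (1/2), le_rfl, le_max_right _ _, max_lt hsub (by norm_num), fun n => ?_⟩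
    rw [ENNReal.ofReal_one, one_mul]
    exact gw_moment_base P hmeas hindep hid ha hg0 hg1 n
  intro k
  induction k with
  | zero =>
    intro g hg0 hgh hgk
    refine hbase g hg0 ?_
    simpa using hgk
  | succ k ih =>
    intro g hg0 hgh hgk
    rcases le_or_gt g 1 with hg1 | hg1
    · exact hbase g hg0 hg1
    · obtain ⟨d', c', hd', hc05', hc1', hm'⟩ := ih (g-1) (by linarith)
        (by linarith) (by push_cast at hgk ⊢; linarith)
      -- choice of the splitting parameter
      set t : ℝ := (1 - α)/8 with htdef
      have ht : 0 < t := by rw [htdef]; linarith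
      have ht8 : t ≤ 1/8 := by rw [htdef]; linarith
      set β₀ : ℝ := (1 + α)/2 with hβ₀
      have hββ : (1+t)*(α + t) ≤ β₀ := by rw [htdef, hβ₀]; nlinarith
      have hβ₀05 : 1/2 ≤ β₀ := by rw [hβ₀]; linarith
      have hβ₀1 : β₀ < 1 := by rw [hβ₀]; linarith
      -- choice of the truncation level
      set K : ℝ≥0∞ := ENNReal.ofReal (1+1/t) ^ h with hKdef
      have hKne : K ≠ ⊤ := by
        rw [hKdef]
        exact ENNReal.rpow_ne_top_of_nonneg (by linarith) ENNReal.ofReal_ne_top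
      have hεpos : 0 < ENNReal.ofReal ((1-β₀)/4) / K := by
        refine ENNReal.div_pos ?_ hKne
        simp only [ne_eq, ENNReal.ofReal_eq_zero, not_le]
        linarith
      obtain ⟨M, hM⟩ := tail_small P (hmeas 0 0) (lt_trans one_pos hh) hmom hεpos
      set δ : ℝ≥0∞ :=
        ∫⁻ ω, (((if ξ 0 0 ω ≤ M then 0 else ξ 0 0 ω) : ℕ) : ℝ≥0∞) ^ h ∂P with hδdef
      set B : ℝ≥0∞ := ENNReal.ofReal ((1+t)*(α + t)) ^ g + K * δ with hBdef
      set C : ℝ≥0∞ := ENNReal.ofReal (1+t) ^ g * ENNReal.ofReal (M:ℝ) ^ g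
          * ENNReal.ofReal ((M:ℝ)^2 / t^2) with hCdef
      set β₁ : ℝ := β₀ + (1-β₀)/4 with hβ₁
      have hβ₁05 : 1/2 ≤ β₁ := by rw [hβ₁]; linarith
      have hβ₁1 : β₁ < 1 := by rw [hβ₁]; linarith
      have hBle : B ≤ ENNReal.ofReal β₁ := by
        rw [hBdef, hβ₁, ENNReal.ofReal_add (by linarith) (by linarith)]
        refine add_le_add ?_ ?_
        · have h1 : ENNReal.ofReal ((1+t)*(α + t)) ≤ 1 := by
            rw [show (1:ℝ≥0∞) = ENNReal.ofReal 1 from ENNReal.ofReal_one.symm]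
            exact ENNReal.ofReal_le_ofReal (by linarith)
          calc ENNReal.ofReal ((1+t)*(α + t)) ^ g
              ≤ ENNReal.ofReal ((1+t)*(α + t)) ^ (1:ℝ) :=
                ENNReal.rpow_le_rpow_of_exponent_ge h1 hg1.le
            _ = ENNReal.ofReal ((1+t)*(α + t)) := ENNReal.rpow_one _
            _ ≤ ENNReal.ofReal β₀ := ENNReal.ofReal_le_ofReal hββ
        · calc K * δ ≤ K * (ENNReal.ofReal ((1-β₀)/4) / K) := mul_le_mul_right hM K
            _ ≤ ENNReal.ofReal ((1-β₀)/4) := ENNReal.mul_div_le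
      have hCne : C ≠ ⊤ := by
        rw [hCdef]
        exact ENNReal.mul_ne_top
          (ENNReal.mul_ne_top (ENNReal.rpow_ne_top_of_nonneg (by linarith) ENNReal.ofReal_ne_top)
            (ENNReal.rpow_ne_top_of_nonneg (by linarith) ENNReal.ofReal_ne_top))
          ENNReal.ofReal_ne_top
      have hperz : ∀ n z : ℕ,
          ∫⁻ ω, ((∑ i ∈ Finset.range z, ξ n i ω : ℕ) : ℝ≥0∞) ^ g ∂P
            ≤ B * (z:ℝ≥0∞) ^ g + C * (z:ℝ≥0∞) ^ (g-1) := fun n z =>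
        per_z_bound P hmeas hindep hid hα hint ht M hg1.le hgh n z
      -- the contraction constant
      set cm : ℝ := max β₁ c' with hcm
      have hcm05 : 1/2 ≤ cm := le_trans hβ₁05 (le_max_left _ _)
      have hcm1 : cm < 1 := max_lt hβ₁1 hc1'
      have hcm0 : 0 ≤ cm := by linarith
      set C2 : ℝ≥0∞ := C * ENNReal.ofReal d' with hC2def
      have hC2ne : C2 ≠ ⊤ := ENNReal.mul_ne_top hCne ENNReal.ofReal_ne_top
      have hrec : ∀ n : ℕ, ∫⁻ ω, ((gw ξ (n+1) ω : ℕ) : ℝ≥0∞) ^ g ∂P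
          ≤ ENNReal.ofReal cm * ∫⁻ ω, ((gw ξ n ω : ℕ) : ℝ≥0∞) ^ g ∂P
            + C2 * ENNReal.ofReal cm ^ n := by
        intro n
        refine le_trans (moment_step P hmeas hindep hperz n) (add_le_add ?_ ?_)
        · exact mul_le_mul_left
            (le_trans hBle (ENNReal.ofReal_le_ofReal (le_max_left _ _))) _
        · calc C * ∫⁻ ω, ((gw ξ n ω : ℕ) : ℝ≥0∞) ^ (g-1) ∂P
              ≤ C * (ENNReal.ofReal d' * ENNReal.ofReal c' ^ n) :=
                mul_le_mul_right (hm' n) C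
            _ = C2 * ENNReal.ofReal c' ^ n := by rw [hC2def]; ring
            _ ≤ C2 * ENNReal.ofReal cm ^ n :=
                mul_le_mul_right
                  (pow_le_pow_left' (ENNReal.ofReal_le_ofReal (le_max_right _ _)) n) _
      have hhalf : (1:ℝ≥0∞) ≤ 2 * ENNReal.ofReal cm := by
        calc (1:ℝ≥0∞) = ENNReal.ofReal 1 := ENNReal.ofReal_one.symm
          _ ≤ ENNReal.ofReal (2 * cm) := ENNReal.ofReal_le_ofReal (by linarith)
          _ = ENNReal.ofReal 2 * ENNReal.ofReal cm := ENNReal.ofReal_mul (by norm_num)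
          _ = 2 * ENNReal.ofReal cm := by rw [ENNReal.ofReal_ofNat]
      have hind : ∀ n : ℕ, ∫⁻ ω, ((gw ξ n ω : ℕ) : ℝ≥0∞) ^ g ∂P
          ≤ (1 + 2 * C2 * n) * ENNReal.ofReal cm ^ n := by
        intro n
        induction n with
        | zero =>
          have : ∀ ω, ((gw ξ 0 ω : ℕ) : ℝ≥0∞) ^ g = 1 := by
            intro ω
            show ((1:ℕ) : ℝ≥0∞) ^ g = 1
            rw [Nat.cast_one, ENNReal.one_rpow]
          rw [lintegral_congr this]
          simp
        | succ n ihn =>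
          calc ∫⁻ ω, ((gw ξ (n+1) ω : ℕ) : ℝ≥0∞) ^ g ∂P
              ≤ ENNReal.ofReal cm * ∫⁻ ω, ((gw ξ n ω : ℕ) : ℝ≥0∞) ^ g ∂P
                + C2 * ENNReal.ofReal cm ^ n := hrec n
            _ ≤ ENNReal.ofReal cm * ((1 + 2 * C2 * n) * ENNReal.ofReal cm ^ n)
                + C2 * ENNReal.ofReal cm ^ n :=
                add_le_add (mul_le_mul_right ihn _) le_rfl
            _ ≤ ENNReal.ofReal cm * ((1 + 2 * C2 * n) * ENNReal.ofReal cm ^ n)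
                + C2 * ((2 * ENNReal.ofReal cm) * ENNReal.ofReal cm ^ n) := by
                refine add_le_add le_rfl ?_
                rw [show C2 * ENNReal.ofReal cm ^ n = C2 * (1 * ENNReal.ofReal cm ^ n) by ring]
                exact mul_le_mul_right (mul_le_mul_left hhalf _) _
            _ = (1 + 2 * C2 * n + 2 * C2) * ENNReal.ofReal cm ^ (n+1) := by ring
            _ = (1 + 2 * C2 * (n+1 : ℕ)) * ENNReal.ofReal cm ^ (n+1) := by
                push_cast
                ring
      -- convert to a clean geometric bound
      set c2r : ℝ := (2 * C2).toReal with hc2r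
      have hc2rnn : 0 ≤ c2r := ENNReal.toReal_nonneg
      have h2C2 : 2 * C2 = ENNReal.ofReal c2r := by
        rw [hc2r, ENNReal.ofReal_toReal (ENNReal.mul_ne_top (by simp) hC2ne)]
      obtain ⟨d₂, hd₂, hpg⟩ := real_poly_geom hcm05 hcm1 hc2rnn
      refine ⟨d₂, (1 + cm)/2, hd₂, by linarith, by linarith, fun n => ?_⟩
      calc ∫⁻ ω, ((gw ξ n ω : ℕ) : ℝ≥0∞) ^ g ∂P
          ≤ (1 + 2 * C2 * n) * ENNReal.ofReal cm ^ n := hind n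
        _ = ENNReal.ofReal ((1 + c2r * n) * cm ^ n) := by
            rw [ENNReal.ofReal_mul (by positivity), ENNReal.ofReal_add one_pos.le (by positivity),
              ENNReal.ofReal_one, ENNReal.ofReal_mul hc2rnn, ENNReal.ofReal_natCast,
              ENNReal.ofReal_pow hcm0, ← h2C2]
        _ ≤ ENNReal.ofReal (d₂ * ((1 + cm)/2) ^ n) := ENNReal.ofReal_le_ofReal (hpg n)
        _ = ENNReal.ofReal d₂ * ENNReal.ofReal ((1 + cm)/2) ^ n := by
            rw [ENNReal.ofReal_mul (by linarith), ENNReal.ofReal_pow (by linarith)]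


lemma finset_rpow_le {p : ℝ} (hp : 1 ≤ p) (x w : ℕ → ℝ≥0∞) (hw0 : ∀ k, w k ≠ 0)
    (hwt : ∀ k, w k ≠ ⊤) (hW : ∀ s : Finset ℕ, ∑ k ∈ s, w k ≤ 1) (s : Finset ℕ) :
    (∑ k ∈ s, x k) ^ p ≤ ∑ k ∈ s, w k ^ (1-p) * x k ^ p := by
  have hppos : (0:ℝ) < p := lt_of_lt_of_le one_pos hp
  rcases Finset.eq_empty_or_nonempty s with hs | hs
  · subst hs; simp [ENNReal.zero_rpow_of_pos hppos]
  set W := ∑ k ∈ s, w k with hWdef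
  have hW0 : W ≠ 0 := by
    rw [hWdef]
    intro hzero
    obtain ⟨k, hk⟩ := hs
    exact hw0 k ((Finset.sum_eq_zero_iff.1 hzero) k hk)
  have hWt : W ≠ ⊤ := (lt_of_le_of_lt (hW s) ENNReal.one_lt_top).ne
  have hw'0 : ∀ k, w k / W ≠ 0 := fun k => by
    simp only [ne_eq, ENNReal.div_eq_zero_iff, not_or]
    exact ⟨hw0 k, hWt⟩
  have hw't : ∀ k, w k / W ≠ ⊤ := fun k => by
    simp only [ne_eq, ENNReal.div_eq_top, not_or, not_and_or]
    exact ⟨Or.inr hW0, Or.inl (hwt k)⟩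
  have hsum1 : ∑ k ∈ s, w k / W = 1 := by
    simp only [div_eq_mul_inv]
    rw [← Finset.sum_mul, ← hWdef, ENNReal.mul_inv_cancel hW0 hWt]
  have hjen := ENNReal.rpow_arith_mean_le_arith_mean_rpow s (fun k => w k / W)
    (fun k => x k / (w k / W)) hsum1 hp
  have hLHS : (∑ k ∈ s, (w k / W) * (x k / (w k / W))) = ∑ k ∈ s, x k :=
    Finset.sum_congr rfl fun k _ => ENNReal.mul_div_cancel (hw'0 k) (hw't k)
  rw [hLHS] at hjen
  refine le_trans hjen (Finset.sum_le_sum fun k _ => ?_)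
  have hxw : (w k / W) * (x k / (w k / W)) ^ p = (w k / W) ^ (1-p) * x k ^ p := by
    rw [ENNReal.div_rpow_of_nonneg _ _ hppos.le]
    have hexp : (w k / W) ^ (1-p) = (w k / W) * ((w k / W) ^ p)⁻¹ := by
      rw [sub_eq_add_neg, ENNReal.rpow_add _ _ (hw'0 k) (hw't k), ENNReal.rpow_one,
        ENNReal.rpow_neg]
    rw [hexp]
    simp only [div_eq_mul_inv]
    ring
  rw [hxw]
  refine mul_le_mul_left ?_ _
  have hge : w k ≤ w k / W := by
    calc w k = w k / 1 := (div_one _).symm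
      _ ≤ w k / W := ENNReal.div_le_div_left (hW s) _
  rw [show (1-p : ℝ) = -(p-1) by ring, ENNReal.rpow_neg, ENNReal.rpow_neg]
  exact ENNReal.inv_le_inv.2 (ENNReal.rpow_le_rpow hge (by linarith))

lemma tsum_rpow_le {p : ℝ} (hp : 1 ≤ p) (x w : ℕ → ℝ≥0∞) (hw0 : ∀ k, w k ≠ 0)
    (hwt : ∀ k, w k ≠ ⊤) (hW : ∀ s : Finset ℕ, ∑ k ∈ s, w k ≤ 1) :
    (∑' k, x k) ^ p ≤ ∑' k, w k ^ (1-p) * x k ^ p := by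
  have htd : Tendsto (fun n => (∑ k ∈ Finset.range n, x k) ^ p) atTop
      (nhds ((∑' k, x k) ^ p)) :=
    (ENNReal.continuous_rpow_const.tendsto _).comp (ENNReal.tendsto_nat_tsum x)
  refine le_of_tendsto htd (Eventually.of_forall fun n => ?_)
  exact le_trans (finset_rpow_le hp x w hw0 hwt hW _) (ENNReal.sum_le_tsum _)

end MoTP

theorem moments_of_total_population
    (P : Measure Ω) [IsProbabilityMeasure P]
    (ξ : ℕ → ℕ → Ω → ℕ)
    (hmeas : ∀ n i, Measurable (ξ n i))
    (hindep : iIndepFun (fun q : ℕ × ℕ => ξ q.1 q.2) P)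
    (hid : ∀ n i, IdentDistrib (ξ n i) (ξ 0 0) P P)
    (α : ℝ)
    (hα : α = ∫ ω, (ξ 0 0 ω : ℝ) ∂P)
    (hsub : α < 1)
    (h : ℝ) (hh : 1 < h)
    (hmom : ∫⁻ ω, (ξ 0 0 ω : ℝ≥0∞) ^ h ∂P < ⊤) :
    (∀ n : ℕ, 1 ≤ n →
      ∫⁻ ω, (gwTotalUpTo ξ n ω : ℝ≥0∞) ^ h ∂P ≤ ∫⁻ ω, (gwTotal ξ ω) ^ h ∂P) ∧
    ∫⁻ ω, (gwTotal ξ ω) ^ h ∂P < ⊤ := by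
  classical
  have hh0 : (0:ℝ) ≤ h := by linarith
  have hTmono : ∀ (n : ℕ) (ω : Ω), ((gwTotalUpTo ξ n ω : ℕ) : ℝ≥0∞) ≤ gwTotal ξ ω := by
    intro n ω
    have h1 : ((gwTotalUpTo ξ n ω : ℕ) : ℝ≥0∞)
        = ∑ k ∈ Finset.range (n+1), ((gw ξ k ω : ℕ) : ℝ≥0∞) := by
      rw [gwTotalUpTo]
      push_cast
      rfl
    rw [h1, gwTotal]
    exact ENNReal.sum_le_tsum _
  refine ⟨fun n _ => lintegral_mono fun ω => ENNReal.rpow_le_rpow (hTmono n ω) hh0, ?_⟩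
  obtain ⟨d, c, hd, hc05, hc1, hmbound⟩ := MoTP.gw_moment_geom P hmeas hindep hid hα hsub hh hmom
    ⌈h⌉₊ h (by linarith) le_rfl (le_trans (Nat.le_ceil h) (by push_cast; linarith))
  have hc0 : (0:ℝ) < c := lt_of_lt_of_le (by norm_num) hc05
  set r : ℝ := ((1+c)/2) ^ (1/(h-1)) with hrdef
  have hcc1 : c < (1+c)/2 := by linarith
  have hcc0 : (0:ℝ) < (1+c)/2 := by linarith
  have hr0 : 0 < r := Real.rpow_pos_of_pos hcc0 _
  have hr1 : r < 1 := Real.rpow_lt_one hcc0.le (by linarith) (div_pos one_pos (by linarith))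
  have hrpow : r ^ (h-1) = (1+c)/2 := by
    rw [hrdef, ← Real.rpow_mul hcc0.le, one_div, inv_mul_cancel₀ (by linarith : h - 1 ≠ 0),
      Real.rpow_one]
  have h1r : (0:ℝ) < 1 - r := by linarith
  set w : ℕ → ℝ≥0∞ := fun k => ENNReal.ofReal ((1-r) * r^k) with hwdef
  have hw0 : ∀ k, w k ≠ 0 := fun k => by
    simp only [hwdef, ne_eq, ENNReal.ofReal_eq_zero, not_le]
    exact mul_pos h1r (pow_pos hr0 k)
  have hwt : ∀ k, w k ≠ ⊤ := fun k => ENNReal.ofReal_ne_top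
  have hwk : ∀ k, w k = ENNReal.ofReal (1-r) * ENNReal.ofReal r ^ k := fun k => by
    simp only [hwdef]
    rw [ENNReal.ofReal_mul (by linarith), ENNReal.ofReal_pow hr0.le]
  have hone_sub : (1:ℝ≥0∞) - ENNReal.ofReal r = ENNReal.ofReal (1-r) := by
    rw [← ENNReal.ofReal_one, ← ENNReal.ofReal_sub _ hr0.le]
  have hWle : ∀ s : Finset ℕ, ∑ k ∈ s, w k ≤ 1 := by
    intro s
    calc ∑ k ∈ s, w k ≤ ∑' k, w k := ENNReal.sum_le_tsum s
      _ = ENNReal.ofReal (1-r) * (1 - ENNReal.ofReal r)⁻¹ := by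
          rw [tsum_congr hwk, ENNReal.tsum_mul_left, ENNReal.tsum_geometric]
      _ = ENNReal.ofReal (1-r) * (ENNReal.ofReal (1-r))⁻¹ := by rw [hone_sub]
      _ ≤ 1 := by
          rw [ENNReal.mul_inv_cancel (by
              simp only [ne_eq, ENNReal.ofReal_eq_zero, not_le]
              linarith) ENNReal.ofReal_ne_top]
  have hpt : ∀ ω, (gwTotal ξ ω) ^ h ≤ ∑' k, w k ^ (1-h) * ((gw ξ k ω : ℕ) : ℝ≥0∞) ^ h :=
    fun ω => MoTP.tsum_rpow_le hh.le (fun k => ((gw ξ k ω : ℕ) : ℝ≥0∞)) w hw0 hwt hWle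
  have hZmeas : ∀ k : ℕ, Measurable (fun ω => ((gw ξ k ω : ℕ) : ℝ≥0∞) ^ h) := fun k =>
    Measurable.pow_const ((measurable_from_top (f := fun m : ℕ => ((m:ℕ) : ℝ≥0∞))).comp
      (MoTP.gw_measurable hmeas k)) _
  have hint2 : ∫⁻ ω, (gwTotal ξ ω) ^ h ∂P
      ≤ ∑' k, w k ^ (1-h) * ∫⁻ ω, ((gw ξ k ω : ℕ) : ℝ≥0∞) ^ h ∂P := by
    calc ∫⁻ ω, (gwTotal ξ ω) ^ h ∂P
        ≤ ∫⁻ ω, ∑' k, w k ^ (1-h) * ((gw ξ k ω : ℕ) : ℝ≥0∞) ^ h ∂P := lintegral_mono hpt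
      _ = ∑' k, ∫⁻ ω, w k ^ (1-h) * ((gw ξ k ω : ℕ) : ℝ≥0∞) ^ h ∂P :=
          lintegral_tsum fun k => (measurable_const.mul (hZmeas k)).aemeasurable
      _ = ∑' k, w k ^ (1-h) * ∫⁻ ω, ((gw ξ k ω : ℕ) : ℝ≥0∞) ^ h ∂P :=
          tsum_congr fun k => lintegral_const_mul _ (hZmeas k)
  set q : ℝ := c / ((1+c)/2) with hqdef
  have hq1 : q < 1 := by
    rw [hqdef, div_lt_one hcc0]
    linarith
  have hq0 : (0:ℝ) ≤ q := le_of_lt (by rw [hqdef]; exact div_pos hc0 hcc0)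
  have hterm : ∀ k, w k ^ (1-h) * ∫⁻ ω, ((gw ξ k ω : ℕ) : ℝ≥0∞) ^ h ∂P
      ≤ (ENNReal.ofReal ((1-r)^(1-h)) * ENNReal.ofReal d) * ENNReal.ofReal q ^ k := by
    intro k
    have hwpow : w k ^ (1-h) = ENNReal.ofReal ((1-r)^(1-h)) * ENNReal.ofReal (r^(1-h)) ^ k := by
      simp only [hwdef]
      rw [ENNReal.ofReal_rpow_of_pos (mul_pos h1r (pow_pos hr0 k)),
        Real.mul_rpow h1r.le (pow_nonneg hr0.le k), ← Real.rpow_natCast r k,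
        ← Real.rpow_mul hr0.le, mul_comm (k:ℝ) (1-h), Real.rpow_mul hr0.le,
        Real.rpow_natCast, ENNReal.ofReal_mul (Real.rpow_nonneg h1r.le _),
        ENNReal.ofReal_pow (Real.rpow_nonneg hr0.le _)]
    have hqr : ENNReal.ofReal (r^(1-h)) * ENNReal.ofReal c = ENNReal.ofReal q := by
      rw [← ENNReal.ofReal_mul (Real.rpow_nonneg hr0.le _), hqdef]
      congr 1
      rw [show (1-h : ℝ) = -(h-1) by ring, Real.rpow_neg hr0.le, hrpow, div_eq_mul_inv]
      ring
    calc w k ^ (1-h) * ∫⁻ ω, ((gw ξ k ω : ℕ) : ℝ≥0∞) ^ h ∂P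
        ≤ w k ^ (1-h) * (ENNReal.ofReal d * ENNReal.ofReal c ^ k) :=
          mul_le_mul_right (hmbound k) _
      _ = (ENNReal.ofReal ((1-r)^(1-h)) * ENNReal.ofReal d)
            * (ENNReal.ofReal (r^(1-h)) * ENNReal.ofReal c) ^ k := by
          rw [hwpow, mul_pow]
          ring
      _ = _ := by rw [hqr]
  calc ∫⁻ ω, (gwTotal ξ ω) ^ h ∂P
      ≤ ∑' k, w k ^ (1-h) * ∫⁻ ω, ((gw ξ k ω : ℕ) : ℝ≥0∞) ^ h ∂P := hint2
    _ ≤ ∑' k : ℕ, (ENNReal.ofReal ((1-r)^(1-h)) * ENNReal.ofReal d) * ENNReal.ofReal q ^ k :=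
        ENNReal.tsum_le_tsum hterm
    _ = (ENNReal.ofReal ((1-r)^(1-h)) * ENNReal.ofReal d) * (1 - ENNReal.ofReal q)⁻¹ := by
        rw [ENNReal.tsum_mul_left, ENNReal.tsum_geometric]
    _ < ⊤ := by
        refine ENNReal.mul_lt_top (ENNReal.mul_lt_top ENNReal.ofReal_lt_top ENNReal.ofReal_lt_top) ?_
        rw [ENNReal.inv_lt_top]
        exact tsub_pos_of_lt (ENNReal.ofReal_lt_one.2 hq1)
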